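/- arXiv:2202.01177 — 8 statements merged into one kernel-verified Lean document; each statement's English description precedes it below -/
import Mathlib

section
/- Equidistant-point symmetry of the Ruijsenaars–Schneider velocity sums (Lemma 1 of the paper): for x_j = j/N, for every k with 1 ≤ k ≤ N and every l, m ∈ {1,…,N}, ∑_{I ⊆ {1,…,N}, |I| = k, l ∈ I} ∏_{i∈I, j∉I} φ(x_j − x_i) = ∑_{I' ⊆ {1,…,N}, |I'| = k, m ∈ I'} ∏_{i∈I', j∉I'} φ(x_j − x_i). -/
open Complex Finset

/-- The odd theta function `ϑ(z|τ)`. -/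
noncomputable def ϑ (τ : ℂ) (z : ℂ) : ℂ :=
  -∑' k : ℤ, Complex.exp (Real.pi * Complex.I * τ * ((k : ℂ) + 1 / 2) ^ 2
      + 2 * Real.pi * Complex.I * (z + 1 / 2) * ((k : ℂ) + 1 / 2))

/-- The Kronecker elliptic function `φ(z) = ϑ'(0)·ϑ(z+hbar)/(ϑ(z)·ϑ(hbar))`. -/
noncomputable def φ₁ (τ hbar z : ℂ) : ℂ :=
  deriv (ϑ τ) 0 * ϑ τ (z + hbar) / (ϑ τ z * ϑ τ hbar)

/-!
Since `ϑ(z + 1) = -ϑ(z)`, the function `φ` has period `1`, so the weight `φ(x_j - x_i)` depends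
only on `j - i` modulo `N`. The cyclic rotation of `{1, …, N}` sending `l` to `m` therefore
preserves every cut product `∏_{i ∈ I, j ∉ I} φ(x_j - x_i)`, and reindexing the sum by it
turns the subsets containing `l` into those containing `m`.
-/

theorem ϑ_antiperiodic (τ : ℂ) : Function.Antiperiodic (ϑ τ) 1 := by
  intro z
  have hterm : ∀ k : ℤ,
      Complex.exp (Real.pi * Complex.I * τ * ((k : ℂ) + 1 / 2) ^ 2
        + 2 * Real.pi * Complex.I * ((z + 1) + 1 / 2) * ((k : ℂ) + 1 / 2))
      = -Complex.exp (Real.pi * Complex.I * τ * ((k : ℂ) + 1 / 2) ^ 2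
        + 2 * Real.pi * Complex.I * (z + 1 / 2) * ((k : ℂ) + 1 / 2)) := by
    intro k
    rw [show Real.pi * Complex.I * τ * ((k : ℂ) + 1 / 2) ^ 2
          + 2 * Real.pi * Complex.I * ((z + 1) + 1 / 2) * ((k : ℂ) + 1 / 2)
        = (Real.pi * Complex.I * τ * ((k : ℂ) + 1 / 2) ^ 2
          + 2 * Real.pi * Complex.I * (z + 1 / 2) * ((k : ℂ) + 1 / 2))
          + (k * (2 * Real.pi * Complex.I) + Real.pi * Complex.I) by ring]
    simp only [Complex.exp_add, Complex.exp_int_mul_two_pi_mul_I, Complex.exp_pi_mul_I]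
    ring
  simp only [ϑ, hterm, tsum_neg]

theorem φ₁_periodic (τ hbar : ℂ) : Function.Periodic (φ₁ τ hbar) 1 := by
  intro z
  rw [φ₁, φ₁, add_right_comm, ϑ_antiperiodic, ϑ_antiperiodic, mul_neg, neg_mul, neg_div_neg_eq]

theorem Function.Periodic.eq_of_intModEq_div {K β : Type*} [Field K] [CharZero K] {f : K → β}
    (hf : Function.Periodic f 1) {N : ℕ} {a b : ℤ} (h : a ≡ b [ZMOD N]) :
    f (a / N) = f (b / N) := by
  obtain ⟨t, ht⟩ := h.dvd
  rcases eq_or_ne N 0 with rfl | hN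
  · rw [Nat.cast_zero, zero_mul, sub_eq_zero] at ht
    rw [ht]
  · have hb : (b : K) / N = a / N + t * 1 := by
      rw [show b = a + N * t by linarith]
      push_cast
      field_simp
    rw [hb, hf.int_mul t]

section CutWeight

variable {α M : Type*} [DecidableEq α] [CommMonoid M]

def cutWeight (w : α → α → M) (s I : Finset α) : M :=
  ∏ i ∈ I, ∏ j ∈ s \ I, w i j

variable {w : α → α → M} {s : Finset α} {σ : Equiv.Perm α}

theorem cutWeight_map_perm (hs : s.map σ.toEmbedding = s)
    (hw : ∀ i ∈ s, ∀ j ∈ s, w (σ i) (σ j) = w i j) {I : Finset α} (hI : I ⊆ s) :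
    cutWeight w s (I.map σ.toEmbedding) = cutWeight w s I := by
  rw [cutWeight, cutWeight]
  conv_lhs => rw [← hs, ← Finset.map_sdiff]
  simp only [prod_map]
  refine prod_congr rfl fun i hi => prod_congr rfl fun j hj => hw i (hI hi) j (mem_sdiff.mp hj).1

end CutWeight

theorem Finset.sum_filter_mem_powersetCard_perm {α β : Type*} [DecidableEq α] [AddCommMonoid β]
    {s : Finset α} {σ : Equiv.Perm α} (hs : s.map σ.toEmbedding = s) {F : Finset α → β}
    (hF : ∀ I ⊆ s, F (I.map σ.toEmbedding) = F I) (k : ℕ) (l : α) :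
    ∑ I ∈ (s.powersetCard k).filter (σ l ∈ ·), F I
      = ∑ I ∈ (s.powersetCard k).filter (l ∈ ·), F I := by
  refine (sum_equiv σ.finsetCongr (fun I => ?_) fun I hI => ?_).symm
  · conv_rhs => rw [Equiv.finsetCongr_apply, mem_filter, mem_powersetCard, ← hs, map_subset_map,
      card_map, mem_map_equiv, Equiv.symm_apply_apply]
    rw [mem_filter, mem_powersetCard]
  · rw [Equiv.finsetCongr_apply, hF I (mem_powersetCard.mp (mem_filter.mp hI).1).1]

section CyclicShift

variable {N d d' j : ℕ}

theorem Nat.ModEq.eq_of_mem_Icc {a b : ℕ} (h : a ≡ b [MOD N]) (ha : a ∈ Icc 1 N)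
    (hb : b ∈ Icc 1 N) : a = b := by
  rw [mem_Icc] at ha hb
  have h' : a - 1 ≡ b - 1 [MOD N] :=
    Nat.ModEq.add_right_cancel' 1 (by rwa [Nat.sub_add_cancel ha.1, Nat.sub_add_cancel hb.1])
  have := h'.eq_of_lt_of_lt (by omega) (by omega)
  omega

/-- The rotation `j ↦ j + d (mod N)` of `{1, …, N}`, extended by the identity to `ℕ`. -/
def cyclicShift (N d j : ℕ) : ℕ :=
  if j ∈ Icc 1 N then (j - 1 + d) % N + 1 else j

theorem cyclicShift_mem (hj : j ∈ Icc 1 N) : cyclicShift N d j ∈ Icc 1 N := by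
  rw [cyclicShift, if_pos hj]
  have := Nat.mod_lt (j - 1 + d) (show 0 < N by simp only [mem_Icc] at hj; omega)
  simp only [mem_Icc]
  omega

theorem cyclicShift_modEq (hj : j ∈ Icc 1 N) : cyclicShift N d j ≡ j + d [MOD N] := by
  rw [cyclicShift, if_pos hj]
  have hj1 : j - 1 + d + 1 = j + d := by simp only [mem_Icc] at hj; omega
  simpa only [hj1] using (Nat.mod_modEq (j - 1 + d) N).add_right 1

theorem cyclicShift_cyclicShift (h : N ∣ d + d') (j : ℕ) :
    cyclicShift N d' (cyclicShift N d j) = j := by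
  by_cases hj : j ∈ Icc 1 N
  · refine Nat.ModEq.eq_of_mem_Icc ?_ (cyclicShift_mem (cyclicShift_mem hj)) hj
    calc cyclicShift N d' (cyclicShift N d j) ≡ cyclicShift N d j + d' [MOD N] :=
          cyclicShift_modEq (cyclicShift_mem hj)
      _ ≡ j + d + d' [MOD N] := (cyclicShift_modEq hj).add_right d'
      _ = j + (d + d') := add_assoc j d d'
      _ ≡ j + 0 [MOD N] := (Nat.modEq_zero_iff_dvd.mpr h).add_left j
  · simp only [cyclicShift, if_neg hj]

def cyclicShiftPerm (N d d' : ℕ) (h : N ∣ d + d') : Equiv.Perm ℕ where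
  toFun := cyclicShift N d
  invFun := cyclicShift N d'
  left_inv := cyclicShift_cyclicShift h
  right_inv := cyclicShift_cyclicShift (add_comm d d' ▸ h)

theorem map_cyclicShiftPerm (h : N ∣ d + d') :
    (Icc 1 N).map (cyclicShiftPerm N d d' h).toEmbedding = Icc 1 N :=
  map_perm fun _ hj => by_contra fun hjN => hj (if_neg hjN)

theorem cyclicShift_sub_modEq {i : ℕ} (hi : i ∈ Icc 1 N) (hj : j ∈ Icc 1 N) :
    (cyclicShift N d j : ℤ) - cyclicShift N d i ≡ j - i [ZMOD N] := by
  have := (Int.natCast_modEq_iff.mpr (cyclicShift_modEq (d := d) hj)).sub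
    (Int.natCast_modEq_iff.mpr (cyclicShift_modEq (d := d) hi))
  simpa only [Nat.cast_add, add_sub_add_right_eq_sub] using this

end CyclicShift

theorem velocity_sum_symmetry_general (τ : ℂ) (hbar : ℂ) (N : ℕ)
    (k : ℕ) (l m : ℕ)
    (hl : l ∈ Finset.Icc 1 N) (hm : m ∈ Finset.Icc 1 N) :
    ∑ I ∈ ((Finset.Icc 1 N).powersetCard k).filter (fun I => l ∈ I),
      ∏ i ∈ I, ∏ j ∈ Finset.Icc 1 N \ I, φ₁ τ hbar ((j : ℂ) / N - (i : ℂ) / N)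
    = ∑ I ∈ ((Finset.Icc 1 N).powersetCard k).filter (fun I => m ∈ I),
        ∏ i ∈ I, ∏ j ∈ Finset.Icc 1 N \ I, φ₁ τ hbar ((j : ℂ) / N - (i : ℂ) / N) := by
  obtain ⟨hl1, hlN⟩ := mem_Icc.mp hl
  obtain ⟨hm1, hmN⟩ := mem_Icc.mp hm
  have hdvd : N ∣ (m + N - l) + (l + N - m) := ⟨2, by omega⟩
  set σ := cyclicShiftPerm N (m + N - l) (l + N - m) hdvd
  have hσl : σ l = m := by
    have hmod := cyclicShift_modEq (d := m + N - l) hl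
    rw [show l + (m + N - l) = m + N by omega] at hmod
    exact (hmod.trans Nat.add_modEq_right).eq_of_mem_Icc (cyclicShift_mem hl) hm
  have hw : ∀ i ∈ Icc 1 N, ∀ j ∈ Icc 1 N,
      φ₁ τ hbar ((σ j : ℂ) / N - (σ i : ℂ) / N) = φ₁ τ hbar ((j : ℂ) / N - (i : ℂ) / N) := by
    intro i hi j hj
    have h := (φ₁_periodic τ hbar).eq_of_intModEq_div
      (cyclicShift_sub_modEq (d := m + N - l) hi hj)
    simp only [Int.cast_sub, Int.cast_natCast, sub_div] at h
    exact h
  rw [← hσl]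
  exact (sum_filter_mem_powersetCard_perm (map_cyclicShiftPerm hdvd)
    (fun I hI => cutWeight_map_perm (map_cyclicShiftPerm hdvd) hw hI) k l).symm

/-- Lemma 1 of the paper: for `x_j = j/N`, the sum over `k`-element subsets
containing a fixed index is independent of that index. -/
theorem velocity_sum_symmetry (τ : ℂ) (hτ : 0 < τ.im) (hbar : ℂ) (N : ℕ) (hN : 0 < N)
    (k : ℕ) (hk1 : 1 ≤ k) (hkN : k ≤ N) (l m : ℕ)
    (hl : l ∈ Finset.Icc 1 N) (hm : m ∈ Finset.Icc 1 N) :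
    ∑ I ∈ ((Finset.Icc 1 N).powersetCard k).filter (fun I => l ∈ I),
      ∏ i ∈ I, ∏ j ∈ Finset.Icc 1 N \ I, φ₁ τ hbar ((j : ℂ) / N - (i : ℂ) / N)
    = ∑ I ∈ ((Finset.Icc 1 N).powersetCard k).filter (fun I => m ∈ I),
        ∏ i ∈ I, ∏ j ∈ Finset.Icc 1 N \ I, φ₁ τ hbar ((j : ℂ) / N - (i : ℂ) / N) :=
  velocity_sum_symmetry_general τ hbar N k l m hl hm
end

section
/- Vanishing sum of f over equidistant points (identity (t14), first part of Lemma 2 of the paper): for every m ∈ {1,…,N}, ∑_{l=1,…,N, l≠m} f(x_l − x_m) = 0. -/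
open Complex Finset

/-- The first Eisenstein function `E₁(z) = ϑ'(z)/ϑ(z)`. -/
noncomputable def E₁ (τ z : ℂ) : ℂ := deriv (ϑ τ) z / ϑ τ z

/-- `g(x) = E₁(ħ+x) − E₁(x)`. -/
noncomputable def gfun (τ hbar x : ℂ) : ℂ := E₁ τ (hbar + x) - E₁ τ x

/-- `f(x) = g(x) − g(−x)`. -/
noncomputable def ffun (τ hbar x : ℂ) : ℂ := gfun τ hbar x - gfun τ hbar (-x)

/-!
Since `ϑ(z + 1) = -ϑ(z)`, the logarithmic derivative `E₁` is `1`-periodic, and so is `f`, which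
is moreover odd. An odd `1`-periodic `F` induces an odd function `a ↦ F (a / N)` on `ℤ/Nℤ`, whose
sum over the group vanishes because `a ↦ -a` permutes it. As `l` runs over `1, …, N`, the
differences `l - m` run over `ℤ/Nℤ` once, and the omitted term `l = m` is `F 0 = 0`.
-/

open Function

section OddPeriodic

variable {K β : Type*} [Field K] [CharZero K]

noncomputable def zmodDescent (F : K → β) (N : ℕ) (a : ZMod N) : β := F (a.val / N)

variable {F : K → β} {N : ℕ}

theorem zmodDescent_intCast [NeZero N] (hF : Periodic F 1) (k : ℤ) :
    zmodDescent F N k = F (k / N) := by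
  have hN : (N : K) ≠ 0 := NeZero.ne _
  have hval : ((k : ZMod N).val : K) = ((k % N : ℤ) : K) := by
    exact_mod_cast congrArg (Int.cast : ℤ → K) (ZMod.val_intCast (n := N) k)
  rw [zmodDescent, hval, Int.emod_def, ← hF.sub_int_mul_eq (x := (k : K) / N) (k / N)]
  push_cast
  field_simp

theorem odd_zmodDescent [Neg β] [NeZero N] (hF : Periodic F 1) (hodd : F.Odd) :
    (zmodDescent F N).Odd := by
  intro a
  rw [← ZMod.intCast_zmod_cast a, ← Int.cast_neg, zmodDescent_intCast hF,
    zmodDescent_intCast hF, Int.cast_neg, neg_div, hodd]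

theorem ZMod.sum_univ_eq_sum_range {M : Type*} [AddCommMonoid M] [NeZero N] (φ : ZMod N → M) :
    ∑ a, φ a = ∑ l ∈ range N, φ l :=
  sum_nbij' ZMod.val Nat.cast (fun a _ => mem_range.2 a.val_lt) (fun _ _ => mem_univ _)
    (fun a _ => ZMod.natCast_zmod_val a) (fun _ hl => ZMod.val_cast_of_lt (mem_range.1 hl))
    (fun a _ => by rw [ZMod.natCast_zmod_val])

theorem ZMod.sum_Icc_one_eq_sum_univ {M : Type*} [AddCommMonoid M] [NeZero N] (φ : ZMod N → M) :
    ∑ l ∈ Icc 1 N, φ l = ∑ a, φ a := by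
  rw [← Ico_add_one_right_eq_Icc, sum_Ico_eq_sum_range, Nat.add_sub_cancel,
    ← Equiv.sum_comp (Equiv.addLeft 1), ZMod.sum_univ_eq_sum_range]
  simp

theorem Function.Odd.sum_Icc_div_sub_div_eq_zero [AddCommGroup β] [IsAddTorsionFree β]
    (hF : Periodic F 1) (hodd : F.Odd) (m : ℕ) :
    ∑ l ∈ Icc 1 N, F ((l : K) / N - (m : K) / N) = 0 := by
  obtain rfl | hN := eq_or_ne N 0
  · simp
  have : NeZero N := ⟨hN⟩
  have hterm (l : ℕ) : F ((l : K) / N - (m : K) / N) = zmodDescent F N ((l : ZMod N) - m) := by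
    have h := zmodDescent_intCast (N := N) hF ((l : ℤ) - m)
    push_cast at h
    rw [h, sub_div]
  simp_rw [hterm]
  rw [ZMod.sum_Icc_one_eq_sum_univ (fun a : ZMod N => zmodDescent F N (a - m))]
  exact (Equiv.sum_comp (Equiv.subRight _) _).trans (odd_zmodDescent hF hodd).sum_eq_zero

theorem Function.Odd.sum_Icc_erase_div_sub_div_eq_zero [AddCommGroup β] [IsAddTorsionFree β]
    (hF : Periodic F 1) (hodd : F.Odd) (m : ℕ) :
    ∑ l ∈ (Icc 1 N).erase m, F ((l : K) / N - (m : K) / N) = 0 := by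
  rw [sum_erase _ (by rw [sub_self, hodd.map_zero]), hodd.sum_Icc_div_sub_div_eq_zero hF]

end OddPeriodic

theorem Function.Antiperiodic.deriv {𝕜 E : Type*} [NontriviallyNormedField 𝕜]
    [NormedAddCommGroup E] [NormedSpace 𝕜 E] {f : 𝕜 → E} {c : 𝕜} (h : Antiperiodic f c) :
    Antiperiodic (deriv f) c := by
  intro x
  rw [← deriv_comp_add_const, h.funext, deriv.neg]

theorem antiperiodic_ϑ (τ : ℂ) : Antiperiodic (ϑ τ) 1 := by
  intro z
  rw [ϑ, ϑ, neg_neg, ← tsum_neg]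
  refine tsum_congr fun k => ?_
  -- the shift multiplies the `k`-th term by `exp (2πi (k + 1/2)) = -1`
  have hexponent : (Real.pi : ℂ) * I * τ * ((k : ℂ) + 1 / 2) ^ 2
      + 2 * Real.pi * I * ((z + 1) + 1 / 2) * ((k : ℂ) + 1 / 2)
      = ((Real.pi : ℂ) * I * τ * ((k : ℂ) + 1 / 2) ^ 2
      + 2 * Real.pi * I * (z + 1 / 2) * ((k : ℂ) + 1 / 2))
      + ((k : ℂ) * (2 * Real.pi * I) + Real.pi * I) := by ring
  rw [hexponent]
  simp [Complex.exp_add, Complex.exp_int_mul_two_pi_mul_I, Complex.exp_pi_mul_I]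

theorem periodic_E₁ (τ : ℂ) : Periodic (E₁ τ) 1 :=
  (antiperiodic_ϑ τ).deriv.div (antiperiodic_ϑ τ)

theorem periodic_ffun (τ hbar : ℂ) : Periodic (ffun τ hbar) 1 := by
  have hg : Periodic (gfun τ hbar) 1 := ((periodic_E₁ τ).const_add hbar).sub (periodic_E₁ τ)
  exact hg.sub fun x => by rw [neg_add, hg.neg]

theorem odd_ffun (τ hbar : ℂ) : (ffun τ hbar).Odd := fun x => by
  simp only [ffun, neg_neg, neg_sub]

theorem f_sum_vanishes_general (τ : ℂ) (hbar : ℂ) (N : ℕ) (m : ℕ) :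
    ∑ l ∈ (Finset.Icc 1 N).erase m, ffun τ hbar ((l : ℂ) / N - (m : ℂ) / N) = 0 :=
  (odd_ffun τ hbar).sum_Icc_erase_div_sub_div_eq_zero (periodic_ffun τ hbar) m

/-- Identity (t14) of the paper: the sum of `f` over the equidistant points vanishes. -/
theorem f_sum_vanishes (τ : ℂ) (hτ : 0 < τ.im) (hbar : ℂ) (N : ℕ) (hN : 0 < N)
    (m : ℕ) (hm : m ∈ Finset.Icc 1 N) :
    ∑ l ∈ (Finset.Icc 1 N).erase m, ffun τ hbar ((l : ℂ) / N - (m : ℂ) / N) = 0 :=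
  f_sum_vanishes_general τ hbar N m
end

section
/- Translation invariance of the doubled products (the core of the Lemma in Section 5 of the paper, proving u'^{k}_m = u'^{k}_l): let l, m ∈ {1,…,N} and define α : {1,…,N} → {1,…,N} by α(i) = ((i + m − l − 1) mod N) + 1. Then for every subset I ⊆ {1,…,N} with |I| = k and l ∈ I, the image α(I) has cardinality k, contains m, and ∏_{i∈I, j∉I} φ(x_j − x_i)·φ(x_i − x_j) = ∏_{i∈α(I), j∉α(I)} φ(x_j − x_i)·φ(x_i − x_j). -/
open Complex Finset

/-- The cyclic shift `α(i) = ((i + m − l − 1) mod N) + 1` on `{1,…,N}`. -/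
def alphaMap (N l m i : ℕ) : ℕ := (((i : ℤ) + (m : ℤ) - (l : ℤ) - 1) % (N : ℤ)).toNat + 1

theorem φ₁_intCast_div_eq_of_modEq (τ hbar : ℂ) (N : ℕ) {a b : ℤ} (h : a ≡ b [ZMOD N]) :
    φ₁ τ hbar (a / N) = φ₁ τ hbar (b / N) := by
  obtain ⟨t, ht⟩ := h.dvd
  rcases eq_or_ne N 0 with rfl | hN
  · simp
  · have hb : (b : ℂ) / N = a / N + t * 1 := by
      rw [show (b : ℂ) = a + N * t by exact_mod_cast sub_eq_iff_eq_add'.mp ht]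
      field_simp
    rw [hb, (φ₁_periodic τ hbar).int_mul t]

section alphaMap

variable {N : ℕ} (l m : ℕ)

theorem alphaMap_modEq (hN : 0 < N) (i : ℕ) :
    (alphaMap N l m i : ℤ) ≡ i + m - l [ZMOD N] := by
  have hnonneg := Int.emod_nonneg ((i : ℤ) + m - l - 1) (Int.natCast_ne_zero.mpr hN.ne')
  have hcast : (alphaMap N l m i : ℤ) = ((i : ℤ) + m - l - 1) % N + 1 := by
    simp [alphaMap, Int.toNat_of_nonneg hnonneg]
  rw [hcast]
  simpa using (Int.mod_modEq ((i : ℤ) + m - l - 1) N).add_right 1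

theorem alphaMap_sub_alphaMap_modEq (hN : 0 < N) (i j : ℕ) :
    (alphaMap N l m i : ℤ) - alphaMap N l m j ≡ i - j [ZMOD N] := by
  convert (alphaMap_modEq l m hN i).sub (alphaMap_modEq l m hN j) using 1
  ring

theorem alphaMap_mem_Icc (hN : 0 < N) (i : ℕ) : alphaMap N l m i ∈ Icc 1 N := by
  have hlt := Int.emod_lt_of_pos ((i : ℤ) + m - l - 1) (Int.natCast_pos.mpr hN)
  simp only [alphaMap, mem_Icc]
  omega

theorem alphaMap_injOn (hN : 0 < N) : Set.InjOn (alphaMap N l m) (Icc 1 N) := by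
  intro i hi j hj hij
  simp only [coe_Icc, Set.mem_Icc] at hi hj
  have hmod : (i : ℤ) ≡ j [ZMOD N] := by
    have := (alphaMap_modEq l m hN i).symm.trans (hij ▸ alphaMap_modEq l m hN j)
    simpa using this.add_right (l - m : ℤ)
  have := Int.eq_zero_of_abs_lt_dvd hmod.dvd (abs_sub_lt_iff.mpr ⟨by omega, by omega⟩)
  omega

theorem alphaMap_self (hm : m ∈ Icc 1 N) : alphaMap N l m l = m := by
  simp only [mem_Icc] at hm
  simp only [alphaMap, add_sub_cancel_left]
  rw [Int.emod_eq_of_lt (by omega) (by omega)]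
  omega

end alphaMap

section doubledProduct

variable {ι M : Type*} [DecidableEq ι] [CommMonoid M]

theorem prod_prod_sdiff_image_eq {S I : Finset ι} {α : ι → ι} (hmaps : Set.MapsTo α S S)
    (hinj : Set.InjOn α S) (hI : I ⊆ S) (F : ι → ι → M)
    (hF : ∀ i ∈ S, ∀ j ∈ S, F (α i) (α j) = F i j) :
    ∏ i ∈ I.image α, ∏ j ∈ S \ I.image α, F i j = ∏ i ∈ I, ∏ j ∈ S \ I, F i j := by
  have hS : S.image α = S :=
    eq_of_subset_of_card_le hmaps.finsetImage_subset (card_image_of_injOn hinj).ge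
  have hcompl : S \ I.image α = (S \ I).image α := by rw [image_sdiff_of_injOn hinj hI, hS]
  rw [hcompl, prod_image (hinj.mono (coe_subset.mpr hI))]
  refine prod_congr rfl fun i hi ↦ ?_
  rw [prod_image (hinj.mono (coe_subset.mpr sdiff_subset))]
  exact prod_congr rfl fun j hj ↦ hF i (hI hi) j (mem_sdiff.mp hj).1

end doubledProduct

theorem doubled_product_translation_general (τ : ℂ) (hbar : ℂ)
    (N : ℕ) (k l m : ℕ)
    (hm : m ∈ Finset.Icc 1 N)
    (I : Finset ℕ) (hI : I ⊆ Finset.Icc 1 N) (hIcard : I.card = k) (hlI : l ∈ I) :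
    (I.image (alphaMap N l m)).card = k ∧ m ∈ I.image (alphaMap N l m) ∧
    (∏ i ∈ I, ∏ j ∈ Finset.Icc 1 N \ I,
        φ₁ τ hbar ((j : ℂ) / N - (i : ℂ) / N) * φ₁ τ hbar ((i : ℂ) / N - (j : ℂ) / N))
    = ∏ i ∈ I.image (alphaMap N l m), ∏ j ∈ Finset.Icc 1 N \ I.image (alphaMap N l m),
        φ₁ τ hbar ((j : ℂ) / N - (i : ℂ) / N) * φ₁ τ hbar ((i : ℂ) / N - (j : ℂ) / N) := by
  have hN : 0 < N := by grind
  have hinj := alphaMap_injOn l m hN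
  refine ⟨by rw [card_image_of_injOn (hinj.mono (coe_subset.mpr hI)), hIcard],
    mem_image.mpr ⟨l, hlI, alphaMap_self l m hm⟩, ?_⟩
  have hcast (a b : ℕ) : (a : ℂ) / N - b / N = ((a - b : ℤ) : ℂ) / N := by push_cast; ring
  refine (prod_prod_sdiff_image_eq (fun i _ ↦ alphaMap_mem_Icc l m hN i) hinj hI _
    fun i _ j _ ↦ ?_).symm
  simp only [hcast, φ₁_intCast_div_eq_of_modEq τ hbar N (alphaMap_sub_alphaMap_modEq l m hN _ _)]

/-- Translation invariance of the doubled products (the core of the Lemma in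
Section 5 of the paper). -/
theorem doubled_product_translation (τ : ℂ) (hτ : 0 < τ.im) (hbar : ℂ)
    (N : ℕ) (hN : 0 < N) (k l m : ℕ)
    (hl : l ∈ Finset.Icc 1 N) (hm : m ∈ Finset.Icc 1 N)
    (I : Finset ℕ) (hI : I ⊆ Finset.Icc 1 N) (hIcard : I.card = k) (hlI : l ∈ I) :
    (I.image (alphaMap N l m)).card = k ∧ m ∈ I.image (alphaMap N l m) ∧
    (∏ i ∈ I, ∏ j ∈ Finset.Icc 1 N \ I,
        φ₁ τ hbar ((j : ℂ) / N - (i : ℂ) / N) * φ₁ τ hbar ((i : ℂ) / N - (j : ℂ) / N))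
    = ∏ i ∈ I.image (alphaMap N l m), ∏ j ∈ Finset.Icc 1 N \ I.image (alphaMap N l m),
        φ₁ τ hbar ((j : ℂ) / N - (i : ℂ) / N) * φ₁ τ hbar ((i : ℂ) / N - (j : ℂ) / N) :=
  doubled_product_translation_general τ hbar N k l m hm I hI hIcard hlI
end

section
/- Trigonometric degeneration of the Kronecker function (formula (a081) of the paper): fix z, u ∈ ℂ with z ∉ ℤ and u ∉ ℤ. Then, as τ ranges over the upper half-plane with Im τ → +∞, the value φ_τ(z, u) tends to π·cot(πz) + π·cot(πu); formally, the function τ ↦ φ_τ(z,u) tends to π·cot(πz) + π·cot(πu) along the filter comap(Im)(atTop) on ℂ. -/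
/-!
With `q = exp (π i τ)` one has `ϑ(z|τ) = q^(1/4) s_τ(z)`, where
`s_τ(z) = -i e^{πiz} θ₂(z + 1/2 + τ/2, τ)` and `θ₂(v + τ/2, τ) = ∑ₙ e^{2πinv} q^(n² + n)`.
Only `n = 0` and `n = -1` have `n² + n = 0`, so by dominated convergence
`s_τ(z) → -i e^{πiz} (1 - e^{-2πiz}) = 2 sin πz` as `Im τ → ∞`, and likewise the
`z`-derivative `s_τ'(z) → 2π cos πz`. The Kronecker function does not change when `ϑ` is rescaled,
so `φ_τ(z, u) → 2π · 2 sin π(z + u) / (2 sin πz · 2 sin πu) = π cot πz + π cot πu`.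
-/

open Complex Filter

/-- The two-variable Kronecker elliptic function `φ_τ(z,u)`. -/
noncomputable def φ₂ (τ : ℂ) (z u : ℂ) : ℂ :=
  deriv (ϑ τ) 0 * ϑ τ (z + u) / (ϑ τ z * ϑ τ u)

open Topology
open scoped Real

noncomputable def normalizedTheta (τ z : ℂ) : ℂ :=
  -I * cexp (π * z * I) * jacobiTheta₂ (z + 1 / 2 + τ / 2) τ

lemma ϑ_eq_cexp_mul_normalizedTheta (τ z : ℂ) :
    ϑ τ z = cexp (π * I * τ / 4) * normalizedTheta τ z := by
  have hterm (k : ℤ) : cexp (π * I * τ * ((k : ℂ) + 1 / 2) ^ 2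
      + 2 * π * I * (z + 1 / 2) * ((k : ℂ) + 1 / 2)) =
      cexp (π * I * τ / 4) * cexp (π / 2 * I) * cexp (π * z * I) *
        jacobiTheta₂_term k (z + 1 / 2 + τ / 2) τ := by
    rw [jacobiTheta₂_term, ← exp_add, ← exp_add, ← exp_add]
    congr 1
    ring
  rw [ϑ, normalizedTheta, jacobiTheta₂, tsum_congr hterm, tsum_mul_left, exp_pi_div_two_mul_I]
  ring

lemma φ₂_eq_normalizedTheta (τ z u : ℂ) :
    φ₂ τ z u = deriv (normalizedTheta τ) 0 * normalizedTheta τ (z + u) /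
      (normalizedTheta τ z * normalizedTheta τ u) := by
  have hc : cexp (π * I * τ / 4) ≠ 0 := exp_ne_zero _
  have hϑ : ϑ τ = fun w ↦ cexp (π * I * τ / 4) * normalizedTheta τ w :=
    funext (ϑ_eq_cexp_mul_normalizedTheta τ)
  rw [φ₂, hϑ, deriv_const_mul_field']
  beta_reduce
  rw [mul_mul_mul_comm, mul_mul_mul_comm _ (normalizedTheta τ z),
    mul_div_mul_left _ _ (mul_ne_zero hc hc)]

lemma tendsto_cexp_pi_mul_I_mul_comap_im {a : ℝ} (ha : 0 < a) :
    Tendsto (fun τ : ℂ ↦ cexp (π * I * a * τ)) (comap im atTop) (𝓝 0) := by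
  have hnorm (τ : ℂ) : ‖cexp (π * I * a * τ)‖ = Real.exp (-(π * a) * τ.im) := by
    rw [norm_exp]
    congr 1
    simp [mul_re, mul_im]
  rw [tendsto_zero_iff_norm_tendsto_zero]
  simp_rw [hnorm]
  exact Real.tendsto_exp_atBot.comp <|
    tendsto_comap.const_mul_atTop_of_neg (neg_lt_zero.2 (by positivity))

lemma jacobiTheta₂_term_add_half (n : ℤ) (v τ : ℂ) :
    jacobiTheta₂_term n (v + τ / 2) τ =
      cexp (2 * π * I * n * v) * cexp (π * I * (n ^ 2 + n) * τ) := by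
  rw [jacobiTheta₂_term, ← exp_add]
  ring_nf

lemma tendsto_jacobiTheta₂_term_add_half (n : ℤ) (v : ℂ) :
    Tendsto (fun τ ↦ jacobiTheta₂_term n (v + τ / 2) τ) (comap im atTop)
      (𝓝 (if n ^ 2 + n = 0 then cexp (2 * π * I * n * v) else 0)) := by
  simp_rw [jacobiTheta₂_term_add_half]
  split_ifs with hn
  · have hn' : (n : ℂ) ^ 2 + n = 0 := by exact_mod_cast hn
    simpa [hn'] using tendsto_const_nhds
  · have hpos : (0 : ℝ) < ((n ^ 2 + n : ℤ) : ℝ) := by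
      have : 0 ≤ n ^ 2 + n := by nlinarith
      exact_mod_cast this.lt_of_ne' hn
    simpa using (tendsto_cexp_pi_mul_I_mul_comap_im hpos).const_mul (cexp (2 * π * I * n * v))

lemma norm_jacobiTheta₂_term_add_half_le (n : ℤ) (v : ℂ) {τ : ℂ} (hτ : 1 ≤ im τ) :
    ‖jacobiTheta₂_term n (v + τ / 2) τ‖ ≤
      Real.exp (-π * (1 * n ^ 2 - 2 * (|im v| + 1 / 2) * |n|)) := by
  rw [norm_jacobiTheta₂_term, Real.exp_le_exp, add_im, div_ofNat_im, Int.cast_abs]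
  have hsq : (0 : ℝ) ≤ (n ^ 2 + n) * (im τ - 1) := by
    refine mul_nonneg ?_ (by linarith)
    have : (0 : ℤ) ≤ n ^ 2 + n := by nlinarith
    exact_mod_cast this
  have hv : -(n * im v) ≤ |(n : ℝ)| * |im v| := abs_mul (n : ℝ) (im v) ▸ neg_le_abs _
  nlinarith [Real.pi_pos, neg_le_abs (n : ℝ), mul_le_mul_of_nonneg_left hv Real.pi_pos.le,
    mul_le_mul_of_nonneg_left hsq Real.pi_pos.le]

lemma tendsto_tsum_mul_jacobiTheta₂_term_add_half (v : ℂ) {c : ℤ → ℂ} {C : ℝ} {k : ℕ}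
    (hc : ∀ n, ‖c n‖ ≤ C * (|n| ^ k : ℝ)) :
    Tendsto (fun τ ↦ ∑' n, c n * jacobiTheta₂_term n (v + τ / 2) τ) (comap im atTop)
      (𝓝 (c 0 + c (-1) * cexp (-(2 * π * I * v)))) := by
  have hlim : ∑' n : ℤ, c n * (if n ^ 2 + n = 0 then cexp (2 * π * I * n * v) else 0) =
      c 0 + c (-1) * cexp (-(2 * π * I * v)) := by
    rw [tsum_eq_sum (s := {0, -1}) fun n hn ↦ ?_, Finset.sum_pair (by decide)]
    · simp
    · have hn' : n ^ 2 + n ≠ 0 := by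
        simp only [Finset.mem_insert, Finset.mem_singleton, not_or] at hn
        intro h
        rcases mul_eq_zero.1 (show n * (n + 1) = 0 by linear_combination h) with h | h <;>
          omega
      simp [hn']
  have hbound : ∀ᶠ τ in comap im atTop, ∀ n : ℤ, ‖c n * jacobiTheta₂_term n (v + τ / 2) τ‖ ≤
      C * ((|n| ^ k : ℝ) * Real.exp (-π * (1 * n ^ 2 - 2 * (|im v| + 1 / 2) * |n|))) := by
    filter_upwards [tendsto_comap.eventually (eventually_ge_atTop 1)] with τ hτ n
    rw [norm_mul, ← mul_assoc]
    exact mul_le_mul (hc n) (norm_jacobiTheta₂_term_add_half_le n v hτ) (norm_nonneg _)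
      ((norm_nonneg _).trans (hc n))
  rw [← hlim]
  exact tendsto_tsum_of_dominated_convergence
    ((summable_pow_mul_jacobiTheta₂_term_bound _ one_pos k).mul_left C)
    (fun n ↦ (tendsto_jacobiTheta₂_term_add_half n v).const_mul (c n)) hbound

lemma tendsto_jacobiTheta₂_add_half (v : ℂ) :
    Tendsto (fun τ ↦ jacobiTheta₂ (v + τ / 2) τ) (comap im atTop)
      (𝓝 (1 + cexp (-(2 * π * I * v)))) := by
  simpa [jacobiTheta₂] using
    tendsto_tsum_mul_jacobiTheta₂_term_add_half v (c := 1) (C := 1) (k := 0) (by simp)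

lemma tendsto_jacobiTheta₂'_add_half (v : ℂ) :
    Tendsto (fun τ ↦ jacobiTheta₂' (v + τ / 2) τ) (comap im atTop)
      (𝓝 (-(2 * π * I) * cexp (-(2 * π * I * v)))) := by
  have hc (n : ℤ) : ‖2 * π * I * n‖ ≤ 2 * π * (|n| ^ 1 : ℝ) := by
    simp [abs_of_pos Real.pi_pos]
  simpa [jacobiTheta₂', jacobiTheta₂'_term, mul_assoc] using
    tendsto_tsum_mul_jacobiTheta₂_term_add_half v hc

lemma hasDerivAt_normalizedTheta {τ : ℂ} (hτ : 0 < im τ) (z : ℂ) :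
    HasDerivAt (normalizedTheta τ) (-I * (π * I * cexp (π * z * I) *
      jacobiTheta₂ (z + 1 / 2 + τ / 2) τ + cexp (π * z * I) *
        jacobiTheta₂' (z + 1 / 2 + τ / 2) τ)) z := by
  have hexp : HasDerivAt (fun w : ℂ ↦ cexp (π * w * I)) (cexp (π * z * I) * (π * I)) z := by
    simpa using (((hasDerivAt_id z).const_mul (π : ℂ)).mul_const I).cexp
  have htheta : HasDerivAt (fun w ↦ jacobiTheta₂ (w + 1 / 2 + τ / 2) τ)
      (jacobiTheta₂' (z + 1 / 2 + τ / 2) τ) z := by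
    simp_rw [add_assoc]
    exact (hasDerivAt_jacobiTheta₂_fst _ hτ).comp_add_const z _
  have hfun : normalizedTheta τ =
      fun w ↦ -I * (cexp (π * w * I) * jacobiTheta₂ (w + 1 / 2 + τ / 2) τ) := by
    funext w
    rw [normalizedTheta, mul_assoc]
  rw [hfun]
  exact ((hexp.mul htheta).const_mul (-I)).congr_deriv (by ring)

lemma cexp_neg_two_pi_I_mul_add_half (z : ℂ) :
    cexp (-(2 * π * I * (z + 1 / 2))) = -cexp (-(π * z) * I) ^ 2 := by
  rw [← neg_one_mul (cexp _ ^ 2), ← exp_neg_pi_mul_I, sq, ← exp_add, ← exp_add]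
  ring_nf

lemma cexp_pi_mul_I_mul_cexp_neg (z : ℂ) : cexp (π * z * I) * cexp (-(π * z) * I) = 1 := by
  rw [← exp_add, neg_mul, add_neg_cancel, exp_zero]

lemma tendsto_normalizedTheta (z : ℂ) :
    Tendsto (fun τ ↦ normalizedTheta τ z) (comap im atTop) (𝓝 (2 * sin (π * z))) := by
  have hlim : -I * cexp (π * z * I) * (1 + cexp (-(2 * π * I * (z + 1 / 2)))) =
      2 * sin (π * z) := by
    rw [cexp_neg_two_pi_I_mul_add_half]
    linear_combination
      -two_sin (π * z) + (I * cexp (-(π * z) * I)) * cexp_pi_mul_I_mul_cexp_neg z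
  rw [← hlim]
  exact (tendsto_jacobiTheta₂_add_half (z + 1 / 2)).const_mul (-I * cexp (π * z * I))

lemma tendsto_deriv_normalizedTheta (z : ℂ) :
    Tendsto (fun τ ↦ deriv (normalizedTheta τ) z) (comap im atTop)
      (𝓝 (2 * π * cos (π * z))) := by
  have hderiv : (fun τ ↦ -I * (π * I * cexp (π * z * I) * jacobiTheta₂ (z + 1 / 2 + τ / 2) τ +
      cexp (π * z * I) * jacobiTheta₂' (z + 1 / 2 + τ / 2) τ)) =ᶠ[comap im atTop]
        fun τ ↦ deriv (normalizedTheta τ) z := by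
    filter_upwards [tendsto_comap.eventually (eventually_gt_atTop 0)] with τ hτ
    exact (hasDerivAt_normalizedTheta hτ z).deriv.symm
  have hlim : -I * (π * I * cexp (π * z * I) * (1 + cexp (-(2 * π * I * (z + 1 / 2)))) +
      cexp (π * z * I) * (-(2 * π * I) * cexp (-(2 * π * I * (z + 1 / 2))))) =
        2 * π * cos (π * z) := by
    rw [cexp_neg_two_pi_I_mul_add_half]
    linear_combination
      -π * two_cos (π * z) + (π * cexp (-(π * z) * I)) * cexp_pi_mul_I_mul_cexp_neg z -
        (π * cexp (π * z * I) * (1 + cexp (-(π * z) * I) ^ 2)) * I_sq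
  rw [← hlim]
  refine Tendsto.congr' hderiv ?_
  exact (((tendsto_jacobiTheta₂_add_half (z + 1 / 2)).const_mul (π * I * cexp (π * z * I))).add
    ((tendsto_jacobiTheta₂'_add_half (z + 1 / 2)).const_mul (cexp (π * z * I)))).const_mul (-I)

lemma Complex.cot_add_cot {a b : ℂ} (ha : sin a ≠ 0) (hb : sin b ≠ 0) :
    cot a + cot b = sin (a + b) / (sin a * sin b) := by
  rw [cot_eq_cos_div_sin, cot_eq_cos_div_sin, sin_add]
  field_simp
  ring

/-- Trigonometric degeneration of the Kronecker function (formula (a081) of the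
paper): as `Im τ → +∞`, `φ_τ(z,u) → π·cot(πz) + π·cot(πu)`. -/
theorem kronecker_trig_limit (z u : ℂ)
    (hz : ∀ n : ℤ, z ≠ (n : ℂ)) (hu : ∀ n : ℤ, u ≠ (n : ℂ)) :
    Tendsto (fun τ : ℂ => φ₂ τ z u) (Filter.comap Complex.im Filter.atTop)
      (nhds (Real.pi * Complex.cot (Real.pi * z) + Real.pi * Complex.cot (Real.pi * u))) := by
  have hz' : sin (π * z) ≠ 0 := sin_pi_mul_ne_zero fun ⟨n, hn⟩ ↦ hz n hn.symm
  have hu' : sin (π * u) ≠ 0 := sin_pi_mul_ne_zero fun ⟨n, hn⟩ ↦ hu n hn.symm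
  have hlim : 2 * π * cos (π * 0) * (2 * sin (π * (z + u))) /
      (2 * sin (π * z) * (2 * sin (π * u))) = π * cot (π * z) + π * cot (π * u) := by
    rw [← mul_add, cot_add_cot hz' hu', mul_add, mul_zero, cos_zero]
    field_simp
  simp_rw [← hlim, φ₂_eq_normalizedTheta]
  exact ((tendsto_deriv_normalizedTheta 0).mul (tendsto_normalizedTheta (z + u))).div
    ((tendsto_normalizedTheta z).mul (tendsto_normalizedTheta u)) (by simp [hz', hu'])
end

section
/- Derivative identity for the trigonometric 6-vertex R-matrix (identities (q36)–(q360) of the paper): let s, u ∈ ℂ, t = s², with u ≠ 0, u·t ≠ 1 and t ≠ u. Let D(u) be the 4×4 matrix whose (a,b) entry is the complex derivative at u of the (a,b) entry of the matrix-valued function v ↦ R̄₂₁(v) = P·R̄(v)·P. Then R̄(u⁻¹) · (u · D(u)) = ((1−t)u/((t−u)(tu−1))) · C, where C is the 4×4 matrix [[0,0,0,0],[0, 1, −s, 0],[0, −s, s², 0],[0,0,0,0]]. -/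
/-!
Conjugating by the flip only exchanges the two off-diagonal entries of the middle block, and
each entry of `R̄(v)` is a Möbius function of `v` with the common pole `v = 1/t`. Hence
`D(u) = (t - 1)/(ut - 1)² • N` for a fixed matrix `N`, and `R̄(u⁻¹) * N = (1 - ut)/(t - u) • C`
is a 2×2 computation in the middle block.
-/

open Matrix

/-- The normalized trigonometric 6-vertex (XXZ) R-matrix `R̄(u)` with `t = s²`,
in the ordered basis `(e₁⊗e₁, e₁⊗e₂, e₂⊗e₁, e₂⊗e₂)`. -/
noncomputable def Rbar (s u : ℂ) : Matrix (Fin 4) (Fin 4) ℂ :=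
  !![1, 0, 0, 0;
     0, s * (u - 1) / (u * s ^ 2 - 1), u * (s ^ 2 - 1) / (u * s ^ 2 - 1), 0;
     0, (s ^ 2 - 1) / (u * s ^ 2 - 1), s * (u - 1) / (u * s ^ 2 - 1), 0;
     0, 0, 0, 1]

/-- The tensor flip: the permutation matrix exchanging the second and third
basis vectors. -/
def Pm : Matrix (Fin 4) (Fin 4) ℂ :=
  !![1, 0, 0, 0;
     0, 0, 1, 0;
     0, 1, 0, 0;
     0, 0, 0, 1]

theorem hasDerivAt_div_linear {𝕜 : Type*} [NontriviallyNormedField 𝕜] (a b c d x : 𝕜)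
    (h : c * x + d ≠ 0) :
    HasDerivAt (fun y => (a * y + b) / (c * y + d)) ((a * d - b * c) / (c * x + d) ^ 2) x :=
  (((hasDerivAt_id x).const_mul a).add_const b).div
    (((hasDerivAt_id x).const_mul c).add_const d) h |>.congr_deriv (by simp only [id]; ring)

theorem Pm_mul_Rbar_mul_Pm (s v : ℂ) : Pm * Rbar s v * Pm =
    !![1, 0, 0, 0;
       0, s * (v - 1) / (v * s ^ 2 - 1), (s ^ 2 - 1) / (v * s ^ 2 - 1), 0;
       0, v * (s ^ 2 - 1) / (v * s ^ 2 - 1), s * (v - 1) / (v * s ^ 2 - 1), 0;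
       0, 0, 0, 1] := by
  ext a b
  fin_cases a <;> fin_cases b <;> simp [Pm, Rbar, mul_apply, Fin.sum_univ_four]

theorem deriv_Pm_mul_Rbar_mul_Pm (s u : ℂ) (h1 : u * s ^ 2 ≠ 1) :
    Matrix.of (fun a b : Fin 4 => deriv (fun v => (Pm * Rbar s v * Pm) a b) u) =
      ((s ^ 2 - 1) / (u * s ^ 2 - 1) ^ 2) •
        !![0, 0, 0, 0;
           0, s, -s ^ 2, 0;
           0, -1, s, 0;
           0, 0, 0, 0] := by
  have hden : s ^ 2 * u + -1 ≠ 0 := by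
    rw [mul_comm, ← sub_eq_add_neg]; exact sub_ne_zero.mpr h1
  have hdiag : deriv (fun v => s * (v - 1) / (v * s ^ 2 - 1)) u =
      (s ^ 2 - 1) / (u * s ^ 2 - 1) ^ 2 * s := by
    convert (hasDerivAt_div_linear s (-s) (s ^ 2) (-1) u hden).deriv using 1
    · congr 1; funext v; ring
    · ring
  have hupper : deriv (fun v => (s ^ 2 - 1) / (v * s ^ 2 - 1)) u =
      (s ^ 2 - 1) / (u * s ^ 2 - 1) ^ 2 * -s ^ 2 := by
    convert (hasDerivAt_div_linear 0 (s ^ 2 - 1) (s ^ 2) (-1) u hden).deriv using 1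
    · congr 1; funext v; ring
    · ring
  have hlower : deriv (fun v => v * (s ^ 2 - 1) / (v * s ^ 2 - 1)) u =
      (s ^ 2 - 1) / (u * s ^ 2 - 1) ^ 2 * -1 := by
    convert (hasDerivAt_div_linear (s ^ 2 - 1) 0 (s ^ 2) (-1) u hden).deriv using 1
    · congr 1; funext v; ring
    · ring
  ext a b
  fin_cases a <;> fin_cases b <;> simp [Pm_mul_Rbar_mul_Pm, hdiag, hupper, hlower]

theorem Rbar_at_inv (s u : ℂ) (hu : u ≠ 0) :
    Rbar s u⁻¹ =
      !![1, 0, 0, 0;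
         0, s * (1 - u) / (s ^ 2 - u), (s ^ 2 - 1) / (s ^ 2 - u), 0;
         0, u * (s ^ 2 - 1) / (s ^ 2 - u), s * (1 - u) / (s ^ 2 - u), 0;
         0, 0, 0, 1] := by
  have hdenom : ∀ x : ℂ, x / (u⁻¹ * s ^ 2 - 1) = u * x / (s ^ 2 - u) := fun x => by
    rw [show u⁻¹ * s ^ 2 - 1 = (s ^ 2 - u) / u by field_simp, div_div_eq_mul_div, mul_comm]
  ext a b
  fin_cases a <;> fin_cases b <;> simp [Rbar, hdenom] <;> field_simp

theorem Rbar_at_inv_mul (s u : ℂ) (hu : u ≠ 0) (h2 : s ^ 2 ≠ u) :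
    Rbar s u⁻¹ * !![0, 0, 0, 0;
                    0, s, -s ^ 2, 0;
                    0, -1, s, 0;
                    0, 0, 0, 0] =
      ((1 - u * s ^ 2) / (s ^ 2 - u)) •
        (!![0, 0, 0, 0;
            0, 1, -s, 0;
            0, -s, s ^ 2, 0;
            0, 0, 0, 0] : Matrix (Fin 4) (Fin 4) ℂ) := by
  have hsu : s ^ 2 - u ≠ 0 := sub_ne_zero.mpr h2
  rw [Rbar_at_inv s u hu]
  ext a b
  fin_cases a <;> fin_cases b <;> simp [mul_apply, Fin.sum_univ_four] <;> field_simp <;> ring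

/-- Identities (q36)–(q360) of the paper: with `D(u)` the entrywise derivative
at `u` of `v ↦ R̄₂₁(v) = P·R̄(v)·P`, one has
`R̄(u⁻¹)·(u·D(u)) = ((1−t)u/((t−u)(tu−1)))·C`, `t = s²`. -/
theorem sixvertex_derivative_identity (s u : ℂ) (hu : u ≠ 0)
    (h1 : u * s ^ 2 ≠ 1) (h2 : s ^ 2 ≠ u) :
    Rbar s u⁻¹ *
        (u • Matrix.of (fun a b : Fin 4 => deriv (fun v => (Pm * Rbar s v * Pm) a b) u))
      = ((1 - s ^ 2) * u / ((s ^ 2 - u) * (s ^ 2 * u - 1))) •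
          (!![0, 0, 0, 0;
              0, 1, -s, 0;
              0, -s, s ^ 2, 0;
              0, 0, 0, 0] : Matrix (Fin 4) (Fin 4) ℂ) := by
  have hd : u * s ^ 2 - 1 ≠ 0 := sub_ne_zero.mpr h1
  have hsu : s ^ 2 - u ≠ 0 := sub_ne_zero.mpr h2
  rw [deriv_Pm_mul_Rbar_mul_Pm s u h1, smul_smul, Matrix.mul_smul, Rbar_at_inv_mul s u hu h2,
    smul_smul]
  congr 1
  field_simp
  ring
end

section
/- Unitarity of the 7-vertex trigonometric R-matrix (identities (y053)–(y054) of the paper): let z, ħ ∈ ℂ with sin(πz) ≠ 0 and sin(πħ) ≠ 0, and let c₇ ∈ ℂ be arbitrary. Then R(z) · (P · R(−z) · P) = (π²/sin²(πħ) − π²/sin²(πz)) · 1 (the 4×4 identity matrix). -/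
open Matrix Complex

/-- The 7-vertex trigonometric R-matrix `R(z)` with parameters `ħ` (`hbar`) and
`c₇`, in the ordered basis `(e₁⊗e₁, e₁⊗e₂, e₂⊗e₁, e₂⊗e₂)`. -/
noncomputable def R7 (hbar c₇ z : ℂ) : Matrix (Fin 4) (Fin 4) ℂ :=
  !![Real.pi * Complex.cot (Real.pi * hbar) + Real.pi * Complex.cot (Real.pi * z), 0, 0, 0;
     0, Real.pi / Complex.sin (Real.pi * hbar), Real.pi / Complex.sin (Real.pi * z), 0;
     0, Real.pi / Complex.sin (Real.pi * z), Real.pi / Complex.sin (Real.pi * hbar), 0;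
     c₇ * Complex.sin (Real.pi * (hbar + z)), 0, 0,
       Real.pi * Complex.cot (Real.pi * hbar) + Real.pi * Complex.cot (Real.pi * z)]

/-!
Both `R(z)` and `P R(-z) P` have the 7-vertex shape `sevenVertex a u v s`. Matrices of this
shape are fixed by conjugation with `P` and closed under multiplication, so the product is
again of this shape, and its entries reduce to the identities
`cot² x - cot² y = 1/sin² x - 1/sin² y` and
`sin (x + y) (cot x - cot y) = -sin (x - y) (cot x + cot y)`.
-/

namespace Complex

theorem cot_neg (x : ℂ) : cot (-x) = -cot x := by
  rw [cot_eq_cos_div_sin, cot_eq_cos_div_sin, cos_neg, sin_neg, div_neg]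

theorem cot_sq_sub_cot_sq {x y : ℂ} (hx : sin x ≠ 0) (hy : sin y ≠ 0) :
    cot x ^ 2 - cot y ^ 2 = 1 / sin x ^ 2 - 1 / sin y ^ 2 := by
  rw [cot_eq_cos_div_sin, cot_eq_cos_div_sin]
  field_simp
  linear_combination sin y ^ 2 * cos_sq_add_sin_sq x - sin x ^ 2 * cos_sq_add_sin_sq y

theorem sin_add_mul_cot_sub_cot {x y : ℂ} (hx : sin x ≠ 0) (hy : sin y ≠ 0) :
    sin (x + y) * (cot x - cot y) = -(sin (x - y) * (cot x + cot y)) := by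
  rw [cot_eq_cos_div_sin, cot_eq_cos_div_sin, sin_add, sin_sub]
  field_simp
  ring

end Complex

section SevenVertex

variable {R : Type*} [CommRing R]

def sevenVertex (a u v s : R) : Matrix (Fin 4) (Fin 4) R :=
  !![a, 0, 0, 0;
     0, u, v, 0;
     0, v, u, 0;
     s, 0, 0, a]

theorem Pm_mul_sevenVertex_mul_Pm (a u v s : ℂ) :
    Pm * sevenVertex a u v s * Pm = sevenVertex a u v s := by
  ext i j
  fin_cases i <;> fin_cases j <;> simp [Pm, sevenVertex, mul_apply, Fin.sum_univ_four]

theorem sevenVertex_mul_sevenVertex (a u v s a' u' v' s' : R) :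
    sevenVertex a u v s * sevenVertex a' u' v' s' =
      sevenVertex (a * a') (u * u' + v * v') (u * v' + v * u') (s * a' + a * s') := by
  ext i j
  fin_cases i <;> fin_cases j <;> simp [sevenVertex, mul_apply, Fin.sum_univ_four] <;> ring

theorem sevenVertex_smul_one (d : R) : sevenVertex d d 0 0 = d • 1 := by
  ext i j
  fin_cases i <;> fin_cases j <;> simp [sevenVertex]

end SevenVertex

theorem R7_eq_sevenVertex (hbar c₇ z : ℂ) :
    R7 hbar c₇ z = sevenVertex
      (Real.pi * cot (Real.pi * hbar) + Real.pi * cot (Real.pi * z))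
      (Real.pi / sin (Real.pi * hbar)) (Real.pi / sin (Real.pi * z))
      (c₇ * sin (Real.pi * (hbar + z))) :=
  rfl

theorem R7_neg_eq_sevenVertex (hbar c₇ z : ℂ) :
    R7 hbar c₇ (-z) = sevenVertex
      (Real.pi * cot (Real.pi * hbar) - Real.pi * cot (Real.pi * z))
      (Real.pi / sin (Real.pi * hbar)) (-(Real.pi / sin (Real.pi * z)))
      (c₇ * sin (Real.pi * (hbar - z))) := by
  simp only [R7_eq_sevenVertex, mul_neg, cot_neg, sin_neg, div_neg, ← sub_eq_add_neg]

/-- Unitarity of the 7-vertex trigonometric R-matrix (identities (y053)–(y054)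
of the paper): `R(z)·(P·R(−z)·P) = (π²/sin²(πħ) − π²/sin²(πz))·1`. -/
theorem sevenvertex_unitarity (hbar c₇ z : ℂ)
    (hz : Complex.sin (Real.pi * z) ≠ 0) (hh : Complex.sin (Real.pi * hbar) ≠ 0) :
    R7 hbar c₇ z * (Pm * R7 hbar c₇ (-z) * Pm)
      = ((Real.pi : ℂ) ^ 2 / Complex.sin (Real.pi * hbar) ^ 2
          - (Real.pi : ℂ) ^ 2 / Complex.sin (Real.pi * z) ^ 2) •
          (1 : Matrix (Fin 4) (Fin 4) ℂ) := by
  have hcot := cot_sq_sub_cot_sq hh hz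
  have hsin := sin_add_mul_cot_sub_cot hh hz
  have hpi : (Real.pi : ℂ) * (hbar + z) = Real.pi * hbar + Real.pi * z := by ring
  have hpi' : (Real.pi : ℂ) * (hbar - z) = Real.pi * hbar - Real.pi * z := by ring
  rw [R7_neg_eq_sevenVertex, Pm_mul_sevenVertex_mul_Pm, R7_eq_sevenVertex,
    sevenVertex_mul_sevenVertex, ← sevenVertex_smul_one]
  congr 1
  · linear_combination (Real.pi : ℂ) ^ 2 * hcot
  · ring
  · ring
  · rw [hpi, hpi']
    linear_combination c₇ * Real.pi * hsin
end

section
/- Differentiated classical Yang–Baxter equation (identity (q74) of the paper): let M be a positive integer and U ⊆ ℂ an open set with U = −U. Let r : U → Mat_{M²}(ℂ) (matrices indexed by Fin M × Fin M, viewed as operators on ℂ^M⊗ℂ^M) be entrywise complex-differentiable on U, with entrywise derivative ∂r. Assume: (i) skew-symmetry, P·r(−z)·P = −r(z) for all z ∈ U, where P is the tensor flip on ℂ^M⊗ℂ^M; (ii) the classical Yang–Baxter equation [r₁₂(z₁−z₂), r₂₃(z₂−z₃)] + [r₁₂(z₁−z₂), r₁₃(z₁−z₃)] + [r₁₃(z₁−z₃),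 r₂₃(z₂−z₃)] = 0 for all z₁, z₂, z₃ ∈ ℂ such that z₁−z₂, z₂−z₃, z₁−z₃ ∈ U. Then for all z₁, z₂, z₃ ∈ ℂ with z₁−z₂, z₂−z₃, z₁−z₃ ∈ U one has the equalities [r₃₁(z₃−z₁) + r₃₂(z₃−z₂), ∂r₁₂(z₁−z₂)] = [r₂₃(z₂−z₃) + r₂₁(z₂−z₁), ∂r₃₁(z₃−z₁)] = [r₁₂(z₁−z₂) + r₁₃(z₁−z₃), ∂r₂₃(z₂−z₃)]. -/
/-!
Skew-symmetry turns `r₃₁(z₃ - z₁)`, `r₃₂(z₃ - z₂)`, `r₂₁(z₂ - z₁)` into `-r₁₃(z₁ - z₃)`,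
`-r₂₃(z₂ - z₃)`, `-r₁₂(z₁ - z₂)`, and, differentiated, shows that `∂r` is even:
`P ∂r(-z) P = ∂r(z)`. After these substitutions the first equality is the derivative of the
classical Yang–Baxter equation with respect to `z₁`, and the second its derivative with respect
to `z₃`; the equation may be differentiated because it holds on a neighbourhood, `U` being open.
-/

open Matrix

/-- The tensor flip on `ℂ^M ⊗ ℂ^M`. -/
def P2 (M : ℕ) : Matrix (Fin M × Fin M) (Fin M × Fin M) ℂ :=
  fun p q => if p.1 = q.2 ∧ p.2 = q.1 then 1 else 0

/-- Embedding acting on the 1st and 2nd tensor factors: `X₁₂ = X ⊗ I`. -/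
def e12 (M : ℕ) (X : Matrix (Fin M × Fin M) (Fin M × Fin M) ℂ) :
    Matrix (Fin M × Fin M × Fin M) (Fin M × Fin M × Fin M) ℂ :=
  fun p q => X (p.1, p.2.1) (q.1, q.2.1) * (if p.2.2 = q.2.2 then 1 else 0)

/-- Embedding acting on the 2nd and 3rd tensor factors: `X₂₃ = I ⊗ X`. -/
def e23 (M : ℕ) (X : Matrix (Fin M × Fin M) (Fin M × Fin M) ℂ) :
    Matrix (Fin M × Fin M × Fin M) (Fin M × Fin M × Fin M) ℂ :=
  fun p q => (if p.1 = q.1 then 1 else 0) * X (p.2.1, p.2.2) (q.2.1, q.2.2)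

/-- Embedding acting on the 1st and 3rd tensor factors:
`(X₁₃)_{(a,b,c),(a',b',c')} = δ_{b,b'}·X_{(a,c),(a',c')}`. -/
def e13 (M : ℕ) (X : Matrix (Fin M × Fin M) (Fin M × Fin M) ℂ) :
    Matrix (Fin M × Fin M × Fin M) (Fin M × Fin M × Fin M) ℂ :=
  fun p q => X (p.1, p.2.2) (q.1, q.2.2) * (if p.2.1 = q.2.1 then 1 else 0)

open Filter Topology

theorem HasDerivAt.lie {𝕜 𝔸 : Type*} [NontriviallyNormedField 𝕜] [NormedRing 𝔸]
    [NormedAlgebra 𝕜 𝔸] {f g : 𝕜 → 𝔸} {f' g' : 𝔸} {z : 𝕜}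
    (hf : HasDerivAt f f' z) (hg : HasDerivAt g g' z) :
    HasDerivAt (fun w => ⁅f w, g w⁆) (⁅f', g z⁆ + ⁅f z, g'⁆) z := by
  have hderiv : ⁅f', g z⁆ + ⁅f z, g'⁆ = (f' * g z + f z * g') - (g' * f z + g z * f') := by
    simp only [Ring.lie_def]; abel
  rw [hderiv]
  exact (hf.fun_mul hg).fun_sub (hg.fun_mul hf)

theorem conj_deriv_neg_eq_of_skew {𝕜 𝔸 : Type*} [NontriviallyNormedField 𝕜] [NormedRing 𝔸]
    [NormedAlgebra 𝕜 𝔸] {U : Set 𝕜} (hU : IsOpen U) {r : 𝕜 → 𝔸} {P : 𝔸}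
    (hskew : ∀ w ∈ U, P * r (-w) * P = -r w) {z : 𝕜} (hz : z ∈ U) {a b : 𝔸}
    (ha : HasDerivAt r a (-z)) (hb : HasDerivAt r b z) : P * a * P = b := by
  have hconj : HasDerivAt (fun w => P * r (-w) * P) (P * -a * P) z := by
    simpa using ((ha.scomp z (hasDerivAt_neg z)).const_mul P).mul_const P
  have hskew_nhds : (fun w => P * r (-w) * P) =ᶠ[𝓝 z] fun w => -r w :=
    eventually_of_mem (hU.mem_nhds hz) hskew
  simpa using hconj.unique (hb.neg.congr_of_eventuallyEq hskew_nhds)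

section Embeddings

variable {M : ℕ}

theorem e12_neg (X : Matrix (Fin M × Fin M) (Fin M × Fin M) ℂ) : e12 M (-X) = -e12 M X := by
  ext p q; simp only [e12, Matrix.neg_apply, neg_mul]

theorem e13_neg (X : Matrix (Fin M × Fin M) (Fin M × Fin M) ℂ) : e13 M (-X) = -e13 M X := by
  ext p q; simp only [e13, Matrix.neg_apply, neg_mul]

theorem e23_neg (X : Matrix (Fin M × Fin M) (Fin M × Fin M) ℂ) : e23 M (-X) = -e23 M X := by
  ext p q; simp only [e23, Matrix.neg_apply, mul_neg]

def cybe (a b c : Matrix (Fin M × Fin M) (Fin M × Fin M) ℂ) :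
    Matrix (Fin M × Fin M × Fin M) (Fin M × Fin M × Fin M) ℂ :=
  ⁅e12 M a, e23 M b⁆ + ⁅e12 M a, e13 M c⁆ + ⁅e13 M c, e23 M b⁆

end Embeddings

section Derivatives

-- Any algebra norm on matrices would do: only the induced (product) topology matters.
attribute [local instance] Matrix.linftyOpNormedRing Matrix.linftyOpNormedAlgebra

theorem Matrix.hasDerivAt_iff_entries {n : Type*} [Fintype n] [DecidableEq n]
    {f : ℂ → Matrix n n ℂ} {f' : Matrix n n ℂ} {z : ℂ} :
    HasDerivAt f f' z ↔ ∀ i j, HasDerivAt (fun w => f w i j) (f' i j) z := by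
  let e : (n → n → ℂ) ≃L[ℂ] Matrix n n ℂ := (ofLinearEquiv ℂ).toContinuousLinearEquiv
  constructor
  · intro h i j
    exact hasDerivAt_pi.1 (hasDerivAt_pi.1 (e.symm.hasFDerivAt.comp_hasDerivAt z h) i) j
  · intro h
    exact e.hasFDerivAt.comp_hasDerivAt z (hasDerivAt_pi.2 fun i => hasDerivAt_pi.2 (h i))

variable {M : ℕ} {f a b c : ℂ → Matrix (Fin M × Fin M) (Fin M × Fin M) ℂ}
  {f' a' b' c' : Matrix (Fin M × Fin M) (Fin M × Fin M) ℂ} {z : ℂ}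

theorem hasDerivAt_e12 (h : HasDerivAt f f' z) :
    HasDerivAt (fun w => e12 M (f w)) (e12 M f') z :=
  hasDerivAt_iff_entries.2 fun _ _ => (hasDerivAt_iff_entries.1 h _ _).mul_const _

theorem hasDerivAt_e13 (h : HasDerivAt f f' z) :
    HasDerivAt (fun w => e13 M (f w)) (e13 M f') z :=
  hasDerivAt_iff_entries.2 fun _ _ => (hasDerivAt_iff_entries.1 h _ _).mul_const _

theorem hasDerivAt_e23 (h : HasDerivAt f f' z) :
    HasDerivAt (fun w => e23 M (f w)) (e23 M f') z :=
  hasDerivAt_iff_entries.2 fun _ _ => (hasDerivAt_iff_entries.1 h _ _).const_mul _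

theorem hasDerivAt_cybe_of_snd_const (ha : HasDerivAt a a' z) (hc : HasDerivAt c c' z)
    (b₀ : Matrix (Fin M × Fin M) (Fin M × Fin M) ℂ) :
    HasDerivAt (fun w => cybe (a w) b₀ (c w))
      (⁅e12 M a', e23 M b₀ + e13 M (c z)⁆ + ⁅e12 M (a z) - e23 M b₀, e13 M c'⁆) z := by
  have hB := hasDerivAt_const z (e23 M b₀)
  have hA := hasDerivAt_e12 ha
  have hC := hasDerivAt_e13 hc
  refine (((hA.lie hB).fun_add (hA.lie hC)).fun_add (hC.lie hB)).congr_deriv ?_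
  simp only [Ring.lie_def]
  noncomm_ring

theorem hasDerivAt_cybe_of_fst_const (a₀ : Matrix (Fin M × Fin M) (Fin M × Fin M) ℂ)
    (hb : HasDerivAt b b' z) (hc : HasDerivAt c c' z) :
    HasDerivAt (fun w => cybe a₀ (b w) (c w))
      (⁅e12 M a₀ + e13 M (c z), e23 M b'⁆ + ⁅e12 M a₀, e13 M c'⁆ + ⁅e13 M c', e23 M (b z)⁆) z := by
  have hA := hasDerivAt_const z (e12 M a₀)
  have hB := hasDerivAt_e23 hb
  have hC := hasDerivAt_e13 hc
  refine (((hA.lie hB).fun_add (hA.lie hC)).fun_add (hC.lie hB)).congr_deriv ?_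
  simp only [Ring.lie_def]
  noncomm_ring

variable {U : Set ℂ} {r dr : ℂ → Matrix (Fin M × Fin M) (Fin M × Fin M) ℂ}
  (hU : IsOpen U)
  (hderiv : ∀ z ∈ U, ∀ p q, HasDerivAt (fun w => r w p q) (dr z p q) z)

include hU hderiv in
theorem P2_conj_deriv_neg_eq (hUneg : U = -U)
    (hskew : ∀ z ∈ U, P2 M * r (-z) * P2 M = -(r z)) (hz : z ∈ U) :
    P2 M * dr (-z) * P2 M = dr z := by
  have hz' : -z ∈ U := by rw [hUneg]; exact Set.neg_mem_neg.2 hz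
  exact conj_deriv_neg_eq_of_skew hU hskew hz (hasDerivAt_iff_entries.2 (hderiv _ hz'))
    (hasDerivAt_iff_entries.2 (hderiv z hz))

variable (hCYBE : ∀ z₁ z₂ z₃ : ℂ, z₁ - z₂ ∈ U → z₂ - z₃ ∈ U → z₁ - z₃ ∈ U →
  cybe (r (z₁ - z₂)) (r (z₂ - z₃)) (r (z₁ - z₃)) = 0)
  {z₁ z₂ z₃ : ℂ} (h12 : z₁ - z₂ ∈ U) (h23 : z₂ - z₃ ∈ U) (h13 : z₁ - z₃ ∈ U)

include hU hderiv hCYBE h12 h23 h13 in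
theorem cybe_deriv_z₁_eq_zero :
    ⁅e12 M (dr (z₁ - z₂)), e23 M (r (z₂ - z₃)) + e13 M (r (z₁ - z₃))⁆
      + ⁅e12 M (r (z₁ - z₂)) - e23 M (r (z₂ - z₃)), e13 M (dr (z₁ - z₃))⁆ = 0 := by
  have hcybe := hasDerivAt_cybe_of_snd_const
    ((hasDerivAt_iff_entries.2 (hderiv _ h12)).comp_sub_const z₁ z₂)
    ((hasDerivAt_iff_entries.2 (hderiv _ h13)).comp_sub_const z₁ z₃) (r (z₂ - z₃))
  have hzero : (fun w => cybe (r (w - z₂)) (r (z₂ - z₃)) (r (w - z₃))) =ᶠ[𝓝 z₁] fun _ => 0 := by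
    filter_upwards [((continuous_sub_right z₂).tendsto z₁).eventually_mem (hU.mem_nhds h12),
      ((continuous_sub_right z₃).tendsto z₁).eventually_mem (hU.mem_nhds h13)] with w hw₂ hw₃
    exact hCYBE w z₂ z₃ hw₂ h23 hw₃
  exact hcybe.unique ((hasDerivAt_const z₁ 0).congr_of_eventuallyEq hzero)

include hU hderiv hCYBE h12 h23 h13 in
theorem cybe_deriv_z₃_eq_zero :
    ⁅e12 M (r (z₁ - z₂)) + e13 M (r (z₁ - z₃)), e23 M (dr (z₂ - z₃))⁆
      + ⁅e12 M (r (z₁ - z₂)), e13 M (dr (z₁ - z₃))⁆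
      + ⁅e13 M (dr (z₁ - z₃)), e23 M (r (z₂ - z₃))⁆ = 0 := by
  have hcybe := hasDerivAt_cybe_of_fst_const (r (z₁ - z₂))
    ((hasDerivAt_iff_entries.2 (hderiv _ h23)).comp_const_sub z₂ z₃)
    ((hasDerivAt_iff_entries.2 (hderiv _ h13)).comp_const_sub z₁ z₃)
  have hzero : (fun w => cybe (r (z₁ - z₂)) (r (z₂ - w)) (r (z₁ - w))) =ᶠ[𝓝 z₃] fun _ => 0 := by
    filter_upwards [((continuous_sub_left z₂).tendsto z₃).eventually_mem (hU.mem_nhds h23),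
      ((continuous_sub_left z₁).tendsto z₃).eventually_mem (hU.mem_nhds h13)] with w hw₂ hw₁
    exact hCYBE z₁ z₂ w h12 hw₂ hw₁
  have hvanish := hcybe.unique ((hasDerivAt_const z₃ 0).congr_of_eventuallyEq hzero)
  rw [e23_neg, e13_neg] at hvanish
  rw [← neg_eq_zero, ← hvanish]
  simp only [Ring.lie_def]
  noncomm_ring

end Derivatives

/-- Here `X₂₁ = e12 (P·X·P)`, `X₃₁ = e13 (P·X·P)`, `X₃₂ = e23 (P·X·P)`. -/
theorem differentiated_CYBE_general (M : ℕ) (U : Set ℂ) (hUopen : IsOpen U)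
    (hUneg : U = -U)
    (r dr : ℂ → Matrix (Fin M × Fin M) (Fin M × Fin M) ℂ)
    (hderiv : ∀ z ∈ U, ∀ p q, HasDerivAt (fun w => r w p q) (dr z p q) z)
    (hskew : ∀ z ∈ U, P2 M * r (-z) * P2 M = -(r z))
    (hCYBE : ∀ z₁ z₂ z₃ : ℂ, z₁ - z₂ ∈ U → z₂ - z₃ ∈ U → z₁ - z₃ ∈ U →
      (e12 M (r (z₁ - z₂)) * e23 M (r (z₂ - z₃))
          - e23 M (r (z₂ - z₃)) * e12 M (r (z₁ - z₂)))
        + (e12 M (r (z₁ - z₂)) * e13 M (r (z₁ - z₃))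
          - e13 M (r (z₁ - z₃)) * e12 M (r (z₁ - z₂)))
        + (e13 M (r (z₁ - z₃)) * e23 M (r (z₂ - z₃))
          - e23 M (r (z₂ - z₃)) * e13 M (r (z₁ - z₃))) = 0)
    (z₁ z₂ z₃ : ℂ) (h12 : z₁ - z₂ ∈ U) (h23 : z₂ - z₃ ∈ U) (h13 : z₁ - z₃ ∈ U) :
    ((e13 M (P2 M * r (z₃ - z₁) * P2 M) + e23 M (P2 M * r (z₃ - z₂) * P2 M))
          * e12 M (dr (z₁ - z₂))
        - e12 M (dr (z₁ - z₂))
          * (e13 M (P2 M * r (z₃ - z₁) * P2 M) + e23 M (P2 M * r (z₃ - z₂) * P2 M))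
      = (e23 M (r (z₂ - z₃)) + e12 M (P2 M * r (z₂ - z₁) * P2 M))
          * e13 M (P2 M * dr (z₃ - z₁) * P2 M)
        - e13 M (P2 M * dr (z₃ - z₁) * P2 M)
          * (e23 M (r (z₂ - z₃)) + e12 M (P2 M * r (z₂ - z₁) * P2 M)))
    ∧
    ((e23 M (r (z₂ - z₃)) + e12 M (P2 M * r (z₂ - z₁) * P2 M))
          * e13 M (P2 M * dr (z₃ - z₁) * P2 M)
        - e13 M (P2 M * dr (z₃ - z₁) * P2 M)
          * (e23 M (r (z₂ - z₃)) + e12 M (P2 M * r (z₂ - z₁) * P2 M))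
      = (e12 M (r (z₁ - z₂)) + e13 M (r (z₁ - z₃))) * e23 M (dr (z₂ - z₃))
        - e23 M (dr (z₂ - z₃)) * (e12 M (r (z₁ - z₂)) + e13 M (r (z₁ - z₃)))) := by
  have hskew' : ∀ {a b : ℂ}, a - b ∈ U → P2 M * r (b - a) * P2 M = -r (a - b) := fun h => by
    simpa using hskew _ h
  have hdr : P2 M * dr (z₃ - z₁) * P2 M = dr (z₁ - z₃) := by
    simpa using P2_conj_deriv_neg_eq hUopen hderiv hUneg hskew h13
  have hz₁ := cybe_deriv_z₁_eq_zero hUopen hderiv hCYBE h12 h23 h13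
  have hz₃ := cybe_deriv_z₃_eq_zero hUopen hderiv hCYBE h12 h23 h13
  rw [hskew' h12, hskew' h13, hskew' h23, hdr, e12_neg, e13_neg, e23_neg]
  simp only [Ring.lie_def] at hz₁ hz₃
  constructor
  · rw [← sub_eq_zero, ← hz₁]; noncomm_ring
  · rw [← sub_eq_zero, ← neg_eq_zero, ← hz₃]; noncomm_ring

/-- Differentiated classical Yang–Baxter equation (identity (q74) of the
paper).  Here `X₂₁ = e12 (P·X·P)`, `X₃₁ = e13 (P·X·P)`, `X₃₂ = e23 (P·X·P)`. -/
theorem differentiated_CYBE (M : ℕ) (hM : 0 < M) (U : Set ℂ) (hUopen : IsOpen U)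
    (hUneg : U = -U)
    (r dr : ℂ → Matrix (Fin M × Fin M) (Fin M × Fin M) ℂ)
    (hderiv : ∀ z ∈ U, ∀ p q, HasDerivAt (fun w => r w p q) (dr z p q) z)
    (hskew : ∀ z ∈ U, P2 M * r (-z) * P2 M = -(r z))
    (hCYBE : ∀ z₁ z₂ z₃ : ℂ, z₁ - z₂ ∈ U → z₂ - z₃ ∈ U → z₁ - z₃ ∈ U →
      (e12 M (r (z₁ - z₂)) * e23 M (r (z₂ - z₃))
          - e23 M (r (z₂ - z₃)) * e12 M (r (z₁ - z₂)))
        + (e12 M (r (z₁ - z₂)) * e13 M (r (z₁ - z₃))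
          - e13 M (r (z₁ - z₃)) * e12 M (r (z₁ - z₂)))
        + (e13 M (r (z₁ - z₃)) * e23 M (r (z₂ - z₃))
          - e23 M (r (z₂ - z₃)) * e13 M (r (z₁ - z₃))) = 0)
    (z₁ z₂ z₃ : ℂ) (h12 : z₁ - z₂ ∈ U) (h23 : z₂ - z₃ ∈ U) (h13 : z₁ - z₃ ∈ U) :
    ((e13 M (P2 M * r (z₃ - z₁) * P2 M) + e23 M (P2 M * r (z₃ - z₂) * P2 M))
          * e12 M (dr (z₁ - z₂))
        - e12 M (dr (z₁ - z₂))
          * (e13 M (P2 M * r (z₃ - z₁) * P2 M) + e23 M (P2 M * r (z₃ - z₂) * P2 M))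
      = (e23 M (r (z₂ - z₃)) + e12 M (P2 M * r (z₂ - z₁) * P2 M))
          * e13 M (P2 M * dr (z₃ - z₁) * P2 M)
        - e13 M (P2 M * dr (z₃ - z₁) * P2 M)
          * (e23 M (r (z₂ - z₃)) + e12 M (P2 M * r (z₂ - z₁) * P2 M)))
    ∧
    ((e23 M (r (z₂ - z₃)) + e12 M (P2 M * r (z₂ - z₁) * P2 M))
          * e13 M (P2 M * dr (z₃ - z₁) * P2 M)
        - e13 M (P2 M * dr (z₃ - z₁) * P2 M)
          * (e23 M (r (z₂ - z₃)) + e12 M (P2 M * r (z₂ - z₁) * P2 M))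
      = (e12 M (r (z₁ - z₂)) + e13 M (r (z₁ - z₃))) * e23 M (dr (z₂ - z₃))
        - e23 M (dr (z₂ - z₃)) * (e12 M (r (z₁ - z₂)) + e13 M (r (z₁ - z₃)))) :=
  differentiated_CYBE_general M U hUopen hUneg r dr hderiv hskew hCYBE z₁ z₂ z₃ h12 h23 h13
end

section
/- Chain identity from the Yang–Baxter equation (identity (aq2710) of the paper, Appendix C): let M ≥ 1 and let R : ℂ → Mat_{M²}(ℂ) (operators on ℂ^M⊗ℂ^M) satisfy the multiplicative-parameter quantum Yang–Baxter equation: for all a, b ∈ ℂ, R₁₂(a)·R₁₃(ab)·R₂₃(b) = R₂₃(b)·R₁₃(ab)·R₁₂(a) as operators on ℂ^M⊗ℂ^M⊗ℂ^M. Let n ≥ 2, let u₁,…,u_n ∈ ℂ be nonzero, and for distinct a, b ∈ {1,…,n} let R_{ab}(w) denote the operator on (ℂ^M)^{⊗n} acting as R(w) on the a-th and b-th tensor factors and as the identity elsewhere. Then R_{n−1,n}(u_{n−1}/u₁)·R_{n−2,n}(u_{n−2}/u₁)⋯R_{2,n}(u₂/u₁) · R_{1,n}(u_n/u₁) · R_{1,2}(u_n/u₂)·R_{1,3}(u_n/u₃)⋯R_{1,n−1}(u_n/u_{n−1})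 = R_{1,2}(u_n/u₂)·R_{1,3}(u_n/u₃)⋯R_{1,n−1}(u_n/u_{n−1}) · R_{1,n}(u_n/u₁) · R_{n−1,n}(u_{n−1}/u₁)·R_{n−2,n}(u_{n−2}/u₁)⋯R_{2,n}(u₂/u₁). -/
open Matrix Finset

/-- The operator on `(ℂ^M)^{⊗n}` (matrices indexed by functions `Fin n → Fin M`)
acting as `X` on the `a`-th and `b`-th tensor factors and as the identity
elsewhere. -/
def emb (M n : ℕ) (a b : Fin n) (X : Matrix (Fin M × Fin M) (Fin M × Fin M) ℂ) :
    Matrix (Fin n → Fin M) (Fin n → Fin M) ℂ :=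
  fun f g => X (f a, f b) (g a, g b) *
    ∏ c ∈ Finset.univ.filter (fun c => c ≠ a ∧ c ≠ b), (if f c = g c then 1 else 0)

open scoped Kronecker

/-!
Up to a permutation of tensor factors, an operator acting on a set `S` of sites is `W ⊗ 1`. Hence operators on a common triple of distinct sites multiply as operators on
`ℂ^M⊗ℂ^M⊗ℂ^M`, so the Yang–Baxter equation holds on every such triple, while operators on disjoint
pairs of sites commute.

Write `D_k = R_{k,n}(u_k/u_1)`, `E_k = R_{1,k}(u_n/u_k)` and `B = R_{1,n}(u_n/u_1)`. The identity
`D_k⋯D_2 · B · E_2⋯E_k = E_2⋯E_k · B · D_k⋯D_2` follows by induction on `k`: the new factors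
`D_{k+1}` and `E_{k+1}` commute past the old ones and meet around `B`, where
`E_{k+1} B D_{k+1} = D_{k+1} B E_{k+1}` is the Yang–Baxter equation with `a = u_n/u_{k+1}` and
`b = u_{k+1}/u_1`.
-/

namespace Matrix

variable {ι α R : Type*} [Fintype ι] [DecidableEq ι] [DecidableEq α] [CommSemiring R]

def onSites (S : Finset ι) (W : Matrix (S → α) (S → α) R) : Matrix (ι → α) (ι → α) R :=
  (W ⊗ₖ (1 : Matrix ({i // i ∉ S} → α) ({i // i ∉ S} → α) R)).submatrix
    (Equiv.piEquivPiSubtypeProd (· ∈ S) _) (Equiv.piEquivPiSubtypeProd (· ∈ S) _)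

theorem onSites_apply (S : Finset ι) (W : Matrix (S → α) (S → α) R) (f g : ι → α) :
    onSites S W f g = W (S.restrict f) (S.restrict g) * if ∀ i ∉ S, f i = g i then 1 else 0 := by
  simp only [onSites, submatrix_apply, Equiv.piEquivPiSubtypeProd_apply, kroneckerMap_apply,
    one_apply, funext_iff, Subtype.forall, mul_ite, mul_one, mul_zero]
  rfl

theorem onSites_mul [Fintype α] (S : Finset ι) (W W' : Matrix (S → α) (S → α) R) :
    onSites S W * onSites S W' = onSites S (W * W') := by
  simp only [onSites, submatrix_mul_equiv, ← mul_kronecker_mul, mul_one]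

theorem onSites_mul_onSites_apply_of_disjoint [Fintype α] {S T : Finset ι} (hST : Disjoint S T)
    (W : Matrix (S → α) (S → α) R) (V : Matrix (T → α) (T → α) R) (f g : ι → α) :
    (onSites S W * onSites T V) f g =
      W (S.restrict f) (S.restrict g) * V (T.restrict f) (T.restrict g) *
        if ∀ i ∉ S ∪ T, f i = g i then 1 else 0 := by
  -- the only intermediate configuration that contributes: `g` on `S`, `f` off `S`
  set h₀ : ι → α := fun i => if i ∈ S then g i else f i
  rw [mul_apply, Finset.sum_eq_single h₀]
  · have hf : ∀ i ∉ S, f i = h₀ i := fun i hi => by simp [h₀, hi]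
    have hS : S.restrict h₀ = S.restrict g := funext fun i => by simp [h₀]
    have hT : T.restrict h₀ = T.restrict f :=
      funext fun i => by simp [h₀, disjoint_right.mp hST i.2]
    have hg : (∀ i ∉ T, h₀ i = g i) ↔ ∀ i ∉ S ∪ T, f i = g i := by
      simp only [h₀, mem_union, not_or]
      refine ⟨fun h i hi => by simpa [hi.1] using h i hi.2, fun h i hi => ?_⟩
      by_cases hiS : i ∈ S
      · simp [hiS]
      · simp [hiS, h i ⟨hiS, hi⟩]
    simp only [onSites_apply, if_pos hf, hS, hT, if_congr hg rfl rfl]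
    ring
  · intro h _ hne
    simp only [onSites_apply]
    by_cases hf : ∀ i ∉ S, f i = h i
    · by_cases hg : ∀ i ∉ T, h i = g i
      · refine absurd (funext fun i => ?_) hne
        by_cases hiS : i ∈ S
        · simp [h₀, hiS, hg i (disjoint_left.mp hST hiS)]
        · simp [h₀, hiS, hf i hiS]
      · simp [hg]
    · simp [hf]
  · simp

theorem commute_onSites_of_disjoint [Fintype α] {S T : Finset ι} (hST : Disjoint S T)
    (W : Matrix (S → α) (S → α) R) (V : Matrix (T → α) (T → α) R) :
    Commute (onSites S W) (onSites T V) := by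
  ext f g
  rw [onSites_mul_onSites_apply_of_disjoint hST, onSites_mul_onSites_apply_of_disjoint hST.symm,
    union_comm, mul_comm (W _ _)]

end Matrix

section SiteValues

variable {ι α : Type*} [DecidableEq ι]

def pairValues (a b : ι) (r : ({a, b} : Finset ι) → α) : α × α :=
  (r ⟨a, by simp⟩, r ⟨b, by simp⟩)

def tripleValues (a b c : ι) (r : ({a, b, c} : Finset ι) → α) : α × α × α :=
  (r ⟨a, by simp⟩, r ⟨b, by simp⟩, r ⟨c, by simp⟩)

theorem tripleValues_bijective {a b c : ι} (hab : a ≠ b) (hac : a ≠ c) (hbc : b ≠ c) :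
    Function.Bijective (tripleValues (α := α) a b c) := by
  constructor
  · intro r s h
    simp only [tripleValues, Prod.mk.injEq] at h
    funext ⟨i, hi⟩
    simp only [mem_insert, mem_singleton] at hi
    rcases hi with rfl | rfl | rfl <;> tauto
  · intro p
    refine ⟨fun i => if i.1 = a then p.1 else if i.1 = b then p.2.1 else p.2.2, ?_⟩
    simp [tripleValues, hab.symm, hac.symm, hbc.symm]

end SiteValues

section TwoSiteOperators

variable {M n : ℕ}

theorem emb_apply (a b : Fin n) (X : Matrix (Fin M × Fin M) (Fin M × Fin M) ℂ)
    (f g : Fin n → Fin M) :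
    emb M n a b X f g =
      X (f a, f b) (g a, g b) * if ∀ i ∉ ({a, b} : Finset (Fin n)), f i = g i then 1 else 0 := by
  simp [emb, prod_boole]

theorem emb_eq_onSites (a b : Fin n) (X : Matrix (Fin M × Fin M) (Fin M × Fin M) ℂ) :
    emb M n a b X = onSites {a, b} (X.submatrix (pairValues a b) (pairValues a b)) := by
  ext f g
  simp [emb_apply, onSites_apply, pairValues]

theorem emb_eq_onSites_e12 {a b c : Fin n} (hac : a ≠ c) (hbc : b ≠ c)
    (X : Matrix (Fin M × Fin M) (Fin M × Fin M) ℂ) :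
    emb M n a b X =
      onSites {a, b, c} ((e12 M X).submatrix (tripleValues a b c) (tripleValues a b c)) := by
  ext f g
  simp only [emb_apply, onSites_apply, submatrix_apply, e12, tripleValues, restrict, mem_insert,
    mem_singleton, not_or, and_imp, mul_ite, mul_one, mul_zero]
  split_ifs <;> grind

theorem emb_eq_onSites_e13 {a b c : Fin n} (hab : a ≠ b) (hbc : b ≠ c)
    (X : Matrix (Fin M × Fin M) (Fin M × Fin M) ℂ) :
    emb M n a c X =
      onSites {a, b, c} ((e13 M X).submatrix (tripleValues a b c) (tripleValues a b c)) := by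
  ext f g
  simp only [emb_apply, onSites_apply, submatrix_apply, e13, tripleValues, restrict, mem_insert,
    mem_singleton, not_or, and_imp, mul_ite, mul_one, mul_zero]
  split_ifs <;> grind

theorem emb_eq_onSites_e23 {a b c : Fin n} (hab : a ≠ b) (hac : a ≠ c)
    (X : Matrix (Fin M × Fin M) (Fin M × Fin M) ℂ) :
    emb M n b c X =
      onSites {a, b, c} ((e23 M X).submatrix (tripleValues a b c) (tripleValues a b c)) := by
  ext f g
  simp only [emb_apply, onSites_apply, submatrix_apply, e23, tripleValues, restrict, mem_insert,
    mem_singleton, not_or, and_imp, mul_ite, mul_one, mul_zero]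
  split_ifs <;> grind

theorem commute_emb {a b c d : Fin n} (hac : a ≠ c) (had : a ≠ d) (hbc : b ≠ c) (hbd : b ≠ d)
    (X Y : Matrix (Fin M × Fin M) (Fin M × Fin M) ℂ) :
    Commute (emb M n a b X) (emb M n c d Y) := by
  rw [emb_eq_onSites, emb_eq_onSites]
  exact commute_onSites_of_disjoint (by simp [hac.symm, had.symm, hbc.symm, hbd.symm]) _ _

theorem emb_yangBaxter {a b c : Fin n} (hab : a ≠ b) (hac : a ≠ c) (hbc : b ≠ c)
    {X Y Z : Matrix (Fin M × Fin M) (Fin M × Fin M) ℂ}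
    (h : e12 M X * e13 M Y * e23 M Z = e23 M Z * e13 M Y * e12 M X) :
    emb M n a b X * emb M n a c Y * emb M n b c Z
      = emb M n b c Z * emb M n a c Y * emb M n a b X := by
  have hπ := tripleValues_bijective (α := Fin M) hab hac hbc
  rw [emb_eq_onSites_e12 hac hbc, emb_eq_onSites_e13 hab hbc, emb_eq_onSites_e23 hab hac]
  simp only [onSites_mul, ← submatrix_mul _ _ _ _ _ hπ, h]

end TwoSiteOperators

theorem List.prod_map_reverse_mul_mul_prod_map_eq {G : Type*} [Monoid G] (B : G) (D E : ℕ → G)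
    (m : ℕ) (hcomm : ∀ j < m, ∀ k < m, j ≠ k → Commute (D j) (E k))
    (hswap : ∀ k < m, E k * B * D k = D k * B * E k) :
    ((List.range m).map D).reverse.prod * B * ((List.range m).map E).prod
      = ((List.range m).map E).prod * B * ((List.range m).map D).reverse.prod := by
  induction m with
  | zero => simp
  | succ m ih =>
    set A := ((List.range m).map D).reverse.prod
    set C := ((List.range m).map E).prod
    have hDC : Commute (D m) C := Commute.list_prod_right _ _ fun x hx => by
      obtain ⟨k, hk, rfl⟩ := List.mem_map.mp hx
      exact hcomm m (by omega) k (by simp at hk; omega) (by simp at hk; omega)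
    have hEA : Commute (E m) A := Commute.list_prod_right _ _ fun x hx => by
      obtain ⟨j, hj, rfl⟩ := List.mem_map.mp (List.mem_reverse.mp hx)
      exact (hcomm j (by simp at hj; omega) m (by omega) (by simp at hj; omega)).symm
    simp only [List.range_succ, List.map_append, List.reverse_append, List.prod_append,
      List.map_singleton, List.reverse_singleton, List.prod_singleton]
    calc D m * A * B * (C * E m)
        = D m * (A * B * C) * E m := by simp only [mul_assoc]
      _ = D m * (C * B * A) * E m := by
        rw [ih (fun j hj k hk => hcomm j (by omega) k (by omega)) (fun k hk => hswap k (by omega))]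
      _ = D m * C * B * (A * E m) := by simp only [mul_assoc]
      _ = C * D m * B * (E m * A) := by rw [hDC.eq, hEA.eq]
      _ = C * (D m * B * E m) * A := by simp only [mul_assoc]
      _ = C * E m * B * (D m * A) := by rw [← hswap m (by omega)]; simp only [mul_assoc]

/-- Chain identity (aq2710) from the Yang–Baxter equation (Appendix C of the
paper).  Sites are labelled `1,…,n`, site `a` corresponding to `⟨(a-1) % n, _⟩ : Fin n`. -/
theorem chain_identity_from_YBE (M : ℕ)
    (R : ℂ → Matrix (Fin M × Fin M) (Fin M × Fin M) ℂ)
    (hYB : ∀ a b : ℂ, e12 M (R a) * e13 M (R (a * b)) * e23 M (R b)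
        = e23 M (R b) * e13 M (R (a * b)) * e12 M (R a))
    (n : ℕ) (hn : 2 ≤ n) (u : ℕ → ℂ) (hu : ∀ a, 1 ≤ a → a ≤ n → u a ≠ 0) :
    let site : ℕ → Fin n := fun a => ⟨(a - 1) % n, Nat.mod_lt _ (by omega)⟩
    let A : Matrix (Fin n → Fin M) (Fin n → Fin M) ℂ :=
      ((List.range (n - 2)).map
        (fun j => emb M n (site (n - 1 - j)) (site n) (R (u (n - 1 - j) / u 1)))).prod
    let B : Matrix (Fin n → Fin M) (Fin n → Fin M) ℂ :=
      emb M n (site 1) (site n) (R (u n / u 1))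
    let C : Matrix (Fin n → Fin M) (Fin n → Fin M) ℂ :=
      ((List.range (n - 2)).map
        (fun j => emb M n (site 1) (site (j + 2)) (R (u n / u (j + 2))))).prod
    A * B * C = C * B * A := by
  intro site A B C
  have hsite_ne : ∀ i j, 1 ≤ i → i ≤ n → 1 ≤ j → j ≤ n → i ≠ j → site i ≠ site j := by
    intro i j _ _ _ _ hij h
    have := congrArg Fin.val h
    simp only [site, Nat.mod_eq_of_lt (show i - 1 < n by omega),
      Nat.mod_eq_of_lt (show j - 1 < n by omega)] at this
    omega
  set D : ℕ → Matrix (Fin n → Fin M) (Fin n → Fin M) ℂ :=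
    fun k => emb M n (site (k + 2)) (site n) (R (u (k + 2) / u 1))
  have hA : A = ((List.range (n - 2)).map D).reverse.prod := by
    rw [← List.map_reverse, List.range_eq_range', List.reverse_range', List.map_map]
    refine congrArg List.prod (List.map_congr_left fun j hj => ?_)
    have : 0 + (n - 2) - 1 - j + 2 = n - 1 - j := by simp at hj; omega
    simp only [Function.comp_apply, D, this]
  rw [hA]
  refine List.prod_map_reverse_mul_mul_prod_map_eq B D _ (n - 2) (fun j hj k hk hjk => ?_)
    (fun k hk => ?_)
  · refine commute_emb ?_ ?_ ?_ ?_ _ _ <;> apply hsite_ne <;> omega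
  · have hquot : u n / u (k + 2) * (u (k + 2) / u 1) = u n / u 1 := by
      field_simp [hu 1 le_rfl (by omega), hu (k + 2) (by omega) (by omega)]
    have hYBk := hYB (u n / u (k + 2)) (u (k + 2) / u 1)
    rw [hquot] at hYBk
    refine emb_yangBaxter ?_ ?_ ?_ hYBk <;> apply hsite_ne <;> omega
end
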